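/- arXiv:2604.22790 — 2 statements merged into one kernel-verified Lean document; each statement's English description precedes it below -/
import Mathlib

section
/- Let n be a positive integer and 0 < μ₀ < μ₁, put a = n/μ₀ and b = n/μ₁ (so a > b > 0), and consider the function f(t) = Γ(n, a·t)/Γ(n) + 1 − Γ(n, b·t)/Γ(n) for t > 0, where Γ(n, x) is the upper incomplete Gamma function. Then the unique stationary point of f on (0, ∞), i.e. the unique solution of f'(t) = 0, is t* = μ₀·μ₁·ln(μ₁/μ₀)/(μ₁ − μ₀). -/
open Real MeasureTheory

/-- Upper incomplete Gamma function `Γ(n, x) = ∫ₓ^∞ e^{-s} s^{n-1} ds`. -/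
noncomputable def uiGamma (n : ℕ) (x : ℝ) : ℝ :=
  ∫ s in Set.Ioi x, Real.exp (-s) * s ^ (n - 1)

lemma uiGamma_integrand_integrable (n : ℕ) (hn : 0 < n) :
    IntegrableOn (fun s : ℝ => Real.exp (-s) * s ^ (n - 1)) (Set.Ioi 0) := by
  have h := Real.GammaIntegral_convergent (s := (n : ℝ)) (by positivity)
  refine h.congr_fun (fun s hs => ?_) measurableSet_Ioi
  have hs' : (0:ℝ) < s := hs
  have : ((n : ℝ) - 1) = ((n - 1 : ℕ) : ℝ) := by
    rw [Nat.cast_sub hn]; simp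
  rw [this]; simp only [Real.rpow_natCast]

lemma uiGamma_eq_sub (n : ℕ) (hn : 0 < n) {x₀ y : ℝ} (h₀ : 0 < x₀) (hy : 0 < y) :
    uiGamma n y = uiGamma n x₀ - ∫ t in x₀..y, Real.exp (-t) * t ^ (n - 1) := by
  have key : ∀ u v : ℝ, 0 < u → u ≤ v →
      uiGamma n u = uiGamma n v + ∫ t in Set.Ioc u v, Real.exp (-t) * t ^ (n - 1) := by
    intro u v hu huv
    have hint := uiGamma_integrand_integrable n hn
    have h1 : IntegrableOn (fun s : ℝ => Real.exp (-s) * s ^ (n - 1)) (Set.Ioc u v) :=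
      hint.mono_set (fun s hs => lt_of_lt_of_le hu hs.1.le)
    have h2 : IntegrableOn (fun s : ℝ => Real.exp (-s) * s ^ (n - 1)) (Set.Ioi v) :=
      hint.mono_set (fun s hs => lt_of_le_of_lt (le_of_lt (lt_of_lt_of_le hu huv)) hs)
    have hunion : Set.Ioc u v ∪ Set.Ioi v = Set.Ioi u := Set.Ioc_union_Ioi_eq_Ioi huv
    have hdisj : Disjoint (Set.Ioc u v) (Set.Ioi v) := by
      rw [Set.disjoint_left]
      rintro s hs1 hs2
      exact absurd hs1.2 (not_le.mpr hs2)
    unfold uiGamma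
    rw [← hunion, setIntegral_union hdisj measurableSet_Ioi h1 h2]
    ring
  rcases le_total x₀ y with h | h
  · rw [intervalIntegral.integral_of_le h, key x₀ y h₀ h]
    ring
  · rw [intervalIntegral.integral_of_ge h, key y x₀ hy h]
    ring

lemma hasDerivAt_uiGamma (n : ℕ) (hn : 0 < n) {x : ℝ} (hx : 0 < x) :
    HasDerivAt (uiGamma n) (-(Real.exp (-x) * x ^ (n - 1))) x := by
  set g : ℝ → ℝ := fun s => Real.exp (-s) * s ^ (n - 1) with hg
  have hcont : Continuous g := by
    apply Continuous.mul
    · exact Real.continuous_exp.comp continuous_neg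
    · exact continuous_pow _
  have hx2 : 0 < x / 2 := by linarith
  have hd : HasDerivAt (fun y => uiGamma n (x / 2) - ∫ t in (x/2)..y, g t)
      (-(g x)) x := by
    have := (intervalIntegral.integral_hasDerivAt_right
      (hcont.intervalIntegrable (x/2) x)
      (hcont.stronglyMeasurableAtFilter _ _)
      hcont.continuousAt : HasDerivAt (fun y => ∫ t in (x/2)..y, g t) (g x) x)
    simpa using this.const_sub (uiGamma n (x / 2))
  refine hd.congr_of_eventuallyEq ?_
  have : Set.Ioi (0:ℝ) ∈ nhds x := Ioi_mem_nhds hx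
  filter_upwards [this] with y hy
  exact uiGamma_eq_sub n hn hx2 hy

/-- The unique stationary point of the total detection error
`f(t) = Γ(n, a t)/Γ(n) + 1 − Γ(n, b t)/Γ(n)` with `a = n/μ₀`, `b = n/μ₁`,
`0 < μ₀ < μ₁`, is `t* = μ₀ μ₁ ln(μ₁/μ₀)/(μ₁ − μ₀)`. -/
theorem unique_stationary_point_of_detection_error
    (n : ℕ) (hn : 0 < n) (μ₀ μ₁ : ℝ) (h0 : 0 < μ₀) (h01 : μ₀ < μ₁)
    (a b : ℝ) (ha : a = n / μ₀) (hb : b = n / μ₁)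
    (f : ℝ → ℝ)
    (hf : f = fun t => uiGamma n (a * t) / Real.Gamma n
        + 1 - uiGamma n (b * t) / Real.Gamma n) :
    ∀ t : ℝ, 0 < t →
      (deriv f t = 0 ↔ t = μ₀ * μ₁ * Real.log (μ₁ / μ₀) / (μ₁ - μ₀)) := by
  intro t ht
  have h1' : 0 < μ₁ := lt_trans h0 h01
  have hnpos : (0:ℝ) < n := by positivity
  have hapos : 0 < a := by rw [ha]; positivity
  have hbpos : 0 < b := by rw [hb]; positivity
  have hab : b < a := by
    rw [ha, hb]
    apply div_lt_div_of_pos_left hnpos h0 h01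
  have hat : 0 < a * t := mul_pos hapos ht
  have hbt : 0 < b * t := mul_pos hbpos ht
  have hΓ : 0 < Real.Gamma n := Real.Gamma_pos_of_pos hnpos
  -- derivative of f
  have hlina : HasDerivAt (fun s : ℝ => a * s) a t := by
    simpa using (hasDerivAt_id t).const_mul a
  have hlinb : HasDerivAt (fun s : ℝ => b * s) b t := by
    simpa using (hasDerivAt_id t).const_mul b
  have hda : HasDerivAt (fun s => uiGamma n (a * s))
      (-(Real.exp (-(a * t)) * (a * t) ^ (n - 1)) * a) t :=
    (hasDerivAt_uiGamma n hn hat).comp t hlina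
  have hdb : HasDerivAt (fun s => uiGamma n (b * s))
      (-(Real.exp (-(b * t)) * (b * t) ^ (n - 1)) * b) t :=
    (hasDerivAt_uiGamma n hn hbt).comp t hlinb
  have hdf : HasDerivAt f
      ((-(Real.exp (-(a * t)) * (a * t) ^ (n - 1)) * a) / Real.Gamma n
        - (-(Real.exp (-(b * t)) * (b * t) ^ (n - 1)) * b) / Real.Gamma n) t := by
    rw [hf]
    exact ((hda.div_const _).add_const 1).sub (hdb.div_const _)
  rw [hdf.deriv]
  -- reduce to equality of positive quantities
  have step1 : ((-(Real.exp (-(a * t)) * (a * t) ^ (n - 1)) * a) / Real.Gamma n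
        - (-(Real.exp (-(b * t)) * (b * t) ^ (n - 1)) * b) / Real.Gamma n) = 0
      ↔ Real.exp (-(a * t)) * (a * t) ^ (n - 1) * a
        = Real.exp (-(b * t)) * (b * t) ^ (n - 1) * b := by
    rw [div_sub_div_same, div_eq_zero_iff]
    constructor
    · rintro (h | h)
      · linarith
      · exact absurd h hΓ.ne'
    · intro h; left; linarith
  rw [step1]
  -- take logarithms
  have hLa : 0 < Real.exp (-(a * t)) * (a * t) ^ (n - 1) * a := by positivity
  have hLb : 0 < Real.exp (-(b * t)) * (b * t) ^ (n - 1) * b := by positivity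
  have step2 : Real.exp (-(a * t)) * (a * t) ^ (n - 1) * a
        = Real.exp (-(b * t)) * (b * t) ^ (n - 1) * b
      ↔ Real.log (Real.exp (-(a * t)) * (a * t) ^ (n - 1) * a)
        = Real.log (Real.exp (-(b * t)) * (b * t) ^ (n - 1) * b) := by
    constructor
    · intro h; rw [h]
    · intro h; exact Real.log_injOn_pos hLa hLb h
  rw [step2]
  have hcast : ((n - 1 : ℕ) : ℝ) = (n : ℝ) - 1 := by
    rw [Nat.cast_sub hn]; simp
  have logexp : ∀ c : ℝ, 0 < c →
      Real.log (Real.exp (-(c * t)) * (c * t) ^ (n - 1) * c)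
        = -(c * t) + ((n:ℝ) - 1) * (Real.log c + Real.log t) + Real.log c := by
    intro c hc
    rw [Real.log_mul (by positivity) hc.ne', Real.log_mul (Real.exp_ne_zero _)
      (by positivity), Real.log_exp, Real.log_pow, hcast,
      Real.log_mul hc.ne' ht.ne']
  rw [logexp a hapos, logexp b hbpos]
  -- now pure algebra
  have key : (-(a * t) + ((n:ℝ) - 1) * (Real.log a + Real.log t) + Real.log a
        = -(b * t) + ((n:ℝ) - 1) * (Real.log b + Real.log t) + Real.log b)
      ↔ t * (a - b) = (n:ℝ) * (Real.log a - Real.log b) := by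
    constructor <;> intro h <;> nlinarith [h]
  rw [key]
  have hlog : Real.log a - Real.log b = Real.log (μ₁ / μ₀) := by
    rw [← Real.log_div hapos.ne' hbpos.ne', ha, hb]
    congr 1
    field_simp
  have hab2 : μ₀ * μ₁ * (a - b) = (n:ℝ) * (μ₁ - μ₀) := by
    rw [ha, hb]; field_simp
  rw [hlog, eq_div_iff (sub_ne_zero_of_ne h01.ne')]
  constructor <;> intro h
  · apply mul_left_cancel₀ hnpos.ne'
    linear_combination μ₀ * μ₁ * h - t * hab2
  · apply mul_left_cancel₀ (show (μ₀ * μ₁ : ℝ) ≠ 0 by positivity)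
    linear_combination (n:ℝ) * h + t * hab2
end

section
/- Let 0 < μ₀ < μ₁ and define t*(μ₀, μ₁) = μ₀ μ₁ ln(μ₁/μ₀)/(μ₁ − μ₀). Then t* is strictly increasing in μ₁ for fixed μ₀ (and strictly increasing in μ₀ for fixed μ₁). -/
/-!
With `u = μ₀⁻¹` and `v = μ₁⁻¹` one has `t*(μ₀, μ₁) = (log v - log u) / (v - u)`: the threshold is
the slope of the chord of `log` between the reciprocals of the two means. Since `log` is strictly
concave, this slope strictly decreases as either endpoint increases, and increasing `μ₁` or `μ₀`
decreases the corresponding endpoint.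
-/

open Real

theorem StrictConcaveOn.slope_strict_anti {𝕜 : Type*} [Field 𝕜] [LinearOrder 𝕜]
    [IsStrictOrderedRing 𝕜] {s : Set 𝕜} {f : 𝕜 → 𝕜} (hf : StrictConcaveOn 𝕜 s f) {a x y : 𝕜}
    (ha : a ∈ s) (hx : x ∈ s) (hy : y ∈ s) (hxa : x ≠ a) (hya : y ≠ a) (hxy : x < y) :
    slope f a y < slope f a x := by
  simpa only [slope_def_field] using hf.secant_strict_mono ha hx hy hxa hya hxy

theorem mul_mul_log_div_div_sub_eq_slope_log_inv {a b : ℝ} (ha : a ≠ 0) (hb : b ≠ 0) :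
    a * b * log (b / a) / (b - a) = slope log a⁻¹ b⁻¹ := by
  rw [slope_def_field, log_div hb ha, log_inv, log_inv, inv_sub_inv hb ha, ← neg_sub b a]
  field_simp
  ring

theorem slope_log_inv_lt_slope_log_inv {a x y : ℝ} (ha : 0 < a) (hx : 0 < x) (hxa : x ≠ a)
    (hya : y ≠ a) (hxy : x < y) : slope log a⁻¹ x⁻¹ < slope log a⁻¹ y⁻¹ :=
  strictConcaveOn_log_Ioi.slope_strict_anti (inv_pos.2 ha) (inv_pos.2 (hx.trans hxy))
    (inv_pos.2 hx) (by simpa using hya) (by simpa using hxa) ((inv_lt_inv₀ (hx.trans hxy) hx).2 hxy)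

/-- The optimal threshold `t*(μ₀,μ₁) = μ₀ μ₁ ln(μ₁/μ₀)/(μ₁ − μ₀)` is strictly
increasing in `μ₁` for fixed `μ₀`, and strictly increasing in `μ₀` for fixed
`μ₁`. -/
theorem tstar_strictMono
    (tstar : ℝ → ℝ → ℝ)
    (htstar : ∀ μ₀ μ₁, tstar μ₀ μ₁ = μ₀ * μ₁ * Real.log (μ₁ / μ₀) / (μ₁ - μ₀)) :
    (∀ μ₀ μ₁ μ₁' : ℝ, 0 < μ₀ → μ₀ < μ₁ → μ₁ < μ₁' →
        tstar μ₀ μ₁ < tstar μ₀ μ₁') ∧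
    (∀ μ₀ μ₀' μ₁ : ℝ, 0 < μ₀ → μ₀ < μ₀' → μ₀' < μ₁ →
        tstar μ₀ μ₁ < tstar μ₀' μ₁) := by
  have htstar_slope {μ₀ μ₁ : ℝ} (h₀ : 0 < μ₀) (h₀₁ : μ₀ < μ₁) :
      tstar μ₀ μ₁ = slope log μ₀⁻¹ μ₁⁻¹ := by
    rw [htstar, mul_mul_log_div_div_sub_eq_slope_log_inv h₀.ne' (h₀.trans h₀₁).ne']
  constructor
  · intro μ₀ μ₁ μ₁' h₀ h₀₁ h₁₁'
    rw [htstar_slope h₀ h₀₁, htstar_slope h₀ (h₀₁.trans h₁₁')]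
    exact slope_log_inv_lt_slope_log_inv h₀ (h₀.trans h₀₁) h₀₁.ne' (h₀₁.trans h₁₁').ne' h₁₁'
  · intro μ₀ μ₀' μ₁ h₀ h₀₀' h₀'₁
    have h₁ : 0 < μ₁ := h₀.trans (h₀₀'.trans h₀'₁)
    rw [htstar_slope h₀ (h₀₀'.trans h₀'₁), htstar_slope (h₀.trans h₀₀') h₀'₁,
      slope_comm log μ₀⁻¹, slope_comm log μ₀'⁻¹]
    exact slope_log_inv_lt_slope_log_inv h₁ h₀ (h₀₀'.trans h₀'₁).ne h₀'₁.ne h₀₀'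
end
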